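/- Fix a finite alphabet of size K ≥ 2. For any tuple ℓ = (ℓ_1,...,ℓ_K) of non-negative integers and any integers C_ij (1 ≤ i < j ≤ K) satisfying |C_ij| ≤ ℓ_i ℓ_j/(4K²) − 2K(ℓ_i + ℓ_j) − 4K² and C_ij ≡ ℓ_i ℓ_j (mod 2) for all i < j, there exists a word w with Parikh image ℓ such that δ_ij(w) = C_ij for all 1 ≤ i < j ≤ K. -/

import Mathlib

def delta {α : Type*} [DecidableEq α] (i j : α) : List α → ℤ
  | [] => 0
  | a :: w => delta i j w + (if a = i then (w.count j : ℤ) else 0)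
      - (if a = j then (w.count i : ℤ) else 0)

section Aux
variable {α : Type*} [DecidableEq α]

lemma delta_nil (i j : α) : delta i j ([] : List α) = 0 := rfl

lemma delta_cons (i j a : α) (w : List α) :
    delta i j (a :: w) = delta i j w + (if a = i then (w.count j : ℤ) else 0)
      - (if a = j then (w.count i : ℤ) else 0) := rfl

lemma delta_self (i : α) (w : List α) : delta i i w = 0 := by
  induction w with
  | nil => rfl
  | cons a w ih => simp [delta_cons, ih]

lemma delta_append (i j : α) (u v : List α) :
    delta i j (u ++ v) = delta i j u + delta i j v
      + (u.count i : ℤ) * v.count j - (u.count j : ℤ) * v.count i := by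
  rcases eq_or_ne i j with rfl | hij
  · simp [delta_self]
  · induction u with
    | nil => simp [delta]
    | cons a u ih =>
      simp only [List.cons_append, delta_cons, ih, List.count_append, List.count_cons]
      by_cases h1 : a = i <;> by_cases h2 : a = j <;>
        simp [h1, h2, hij, Ne.symm hij] <;> push_cast <;> ring

lemma delta_of_count_left (i j : α) {w : List α} (h : w.count i = 0) : delta i j w = 0 := by
  induction w with
  | nil => rfl
  | cons a w ih =>
    rw [List.count_cons] at h
    by_cases h1 : a = i
    · simp [h1] at h
    · simp [h1] at h
      simp [delta_cons, ih h, h1, h]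

lemma delta_of_count_right (i j : α) {w : List α} (h : w.count j = 0) : delta i j w = 0 := by
  induction w with
  | nil => rfl
  | cons a w ih =>
    rw [List.count_cons] at h
    by_cases h1 : a = j
    · simp [h1] at h
    · simp [h1] at h
      simp [delta_cons, ih h, h1, h]

lemma delta_replicate (i j x : α) (n : ℕ) : delta i j (List.replicate n x) = 0 := by
  by_cases h : x = i
  · subst h
    by_cases h2 : x = j
    · subst h2; exact delta_self _ _
    · exact delta_of_count_right _ _ (by simp [List.count_replicate, h2, Ne.symm h2])
  · exact delta_of_count_left _ _ (by simp [List.count_replicate, h, Ne.symm h])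

end Aux

section Aux2
variable {α : Type*} [DecidableEq α]

lemma delta_sandwich (i j : α) (R V S : List α) (h : ∀ k, R.count k = S.count k) :
    delta i j (R ++ V ++ S) = delta i j R + delta i j V + delta i j S := by
  rw [delta_append, delta_append, List.count_append, List.count_append, h i, h j]
  push_cast
  ring

/-- Two-letter block with `a` copies of `i`, `b` copies of `j`, `s` inversions. -/
def blk (i j : α) (a b s : ℕ) : List α :=
  if s / a = b then List.replicate b j ++ List.replicate a i
  else List.replicate (s / a) j ++ List.replicate (a - s % a) i ++ [j]
    ++ List.replicate (s % a) i ++ List.replicate (b - 1 - s / a) j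

lemma blk_eq (i j : α) (a b s : ℕ) (hs : s ≤ a * b) :
    (s = a * b ∧ blk i j a b s = List.replicate b j ++ List.replicate a i) ∨
    (∃ q r, r ≤ a ∧ q < b ∧ a * q + r = s ∧
      blk i j a b s = List.replicate q j ++ List.replicate (a - r) i ++ [j]
        ++ List.replicate r i ++ List.replicate (b - 1 - q) j) := by
  unfold blk
  split_ifs with h
  · left
    refine ⟨?_, rfl⟩
    rcases Nat.eq_zero_or_pos a with rfl | ha
    · have h0 : s = 0 := by omega
      subst h0
      simp at h
      omega
    · have h2 : a * b ≤ s := by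
        rw [← h, mul_comm]
        exact Nat.div_mul_le_self s a
      omega
  · right
    refine ⟨s / a, s % a, ?_, ?_, Nat.div_add_mod s a, rfl⟩
    · rcases Nat.eq_zero_or_pos a with rfl | ha
      · have h0 : s = 0 := by omega
        simp [h0]
      · exact le_of_lt (Nat.mod_lt _ ha)
    · rcases Nat.eq_zero_or_pos a with rfl | ha
      · simp at h ⊢
        omega
      · have hq : s / a ≤ b := by
          calc s / a ≤ a * b / a := Nat.div_le_div_right hs
            _ = b := by rw [Nat.mul_div_cancel_left _ ha]
        exact lt_of_le_of_ne hq h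

lemma blk_count_other (i j : α) (a b s : ℕ) (k : α) (hki : k ≠ i) (hkj : k ≠ j) :
    (blk i j a b s).count k = 0 := by
  unfold blk
  split_ifs with h <;>
    simp [List.count_append, List.count_replicate, List.count_cons,
      Ne.symm hki, Ne.symm hkj]

lemma blk_count_left (i j : α) (hij : i ≠ j) (a b s : ℕ) (hs : s ≤ a * b) :
    (blk i j a b s).count i = a := by
  rcases blk_eq i j a b s hs with ⟨_, he⟩ | ⟨q, r, hr, hq, hsr, he⟩ <;> rw [he] <;>
    simp [List.count_append, List.count_replicate, List.count_cons, hij, Ne.symm hij] <;>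
    omega

lemma blk_count_right (i j : α) (hij : i ≠ j) (a b s : ℕ) (hs : s ≤ a * b) :
    (blk i j a b s).count j = b := by
  rcases blk_eq i j a b s hs with ⟨_, he⟩ | ⟨q, r, hr, hq, hsr, he⟩ <;> rw [he] <;>
    simp [List.count_append, List.count_replicate, List.count_cons, hij, Ne.symm hij] <;>
    omega

lemma blk_delta (i j : α) (hij : i ≠ j) (a b s : ℕ) (hs : s ≤ a * b) :
    delta i j (blk i j a b s) = (a : ℤ) * b - 2 * s := by
  rcases blk_eq i j a b s hs with ⟨h1, he⟩ | ⟨q, r, hr, hq, hsr, he⟩ <;> rw [he]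
  · rw [delta_append, delta_replicate, delta_replicate]
    simp [List.count_replicate, hij, Ne.symm hij, h1]
    push_cast
    ring
  · rw [delta_append, delta_append, delta_append, delta_append]
    simp [delta_replicate, List.count_append, List.count_replicate,
      delta_cons, delta_nil, List.count_cons, List.count_nil, hij, Ne.symm hij]
    have c1 : ((a - r : ℕ) : ℤ) = (a : ℤ) - (r : ℤ) := by omega
    have c2 : ((b - 1 - q : ℕ) : ℤ) = (b : ℤ) - 1 - (q : ℤ) := by omega
    have c3 : ((s : ℕ) : ℤ) = (a : ℤ) * (q : ℤ) + (r : ℤ) := by exact_mod_cast hsr.symm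
    rw [c1, c2, c3]
    ring

end Aux2

section Aux3
variable {α β : Type*} [DecidableEq α] [DecidableEq β]

/-- Nested sandwich construction. -/
def build (fR fS : β → List α) (M : List α) : List β → List α
  | [] => M
  | p :: ps => fR p ++ build fR fS M ps ++ fS p

lemma count_build (fR fS : β → List α) (M : List α) (k : α) : ∀ ps : List β,
    (build fR fS M ps).count k
      = M.count k + (ps.map (fun p => (fR p).count k + (fS p).count k)).sum
  | [] => by simp [build]
  | p :: ps => by
    simp [build, List.count_append, count_build fR fS M k ps]
    ring

lemma delta_build (fR fS : β → List α) (M : List α) (i j : α)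
    (hcnt : ∀ p, ∀ k, (fR p).count k = (fS p).count k) : ∀ ps : List β,
    delta i j (build fR fS M ps)
      = delta i j M + (ps.map (fun p => delta i j (fR p) + delta i j (fS p))).sum
  | [] => by simp [build]
  | p :: ps => by
    rw [show build fR fS M (p :: ps) = fR p ++ build fR fS M ps ++ fS p from rfl,
      delta_sandwich i j _ _ _ (hcnt p), delta_build fR fS M i j hcnt ps,
      List.map_cons, List.sum_cons]
    ring

lemma sum_map_single {f : β → ℤ} {l : List β} {p₀ : β}
    (hnd : l.Nodup) (hmem : p₀ ∈ l) (h0 : ∀ p ∈ l, p ≠ p₀ → f p = 0) :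
    (l.map f).sum = f p₀ := by
  induction l with
  | nil => simp at hmem
  | cons a l ih =>
    rw [List.nodup_cons] at hnd
    by_cases ha : a = p₀
    · subst ha
      have hz : ∀ p ∈ l, f p = 0 := fun p hp =>
        h0 p (List.mem_cons_of_mem _ hp) (fun e => hnd.1 (e ▸ hp))
      rw [List.map_cons, List.sum_cons,
        List.sum_eq_zero (by simpa using hz), add_zero]
    · have hmem' : p₀ ∈ l := by
        rcases List.mem_cons.mp hmem with e | h
        · exact absurd e.symm ha
        · exact h
      rw [List.map_cons, List.sum_cons,
        ih hnd.2 hmem' (fun p hp => h0 p (List.mem_cons_of_mem _ hp)),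
        h0 a List.mem_cons_self ha, zero_add]

/-- join of replicates -/
def Jw (m : α → ℕ) (L : List α) : List α := L.flatMap (fun k => List.replicate (m k) k)

lemma Jw_nil (m : α → ℕ) : Jw m [] = [] := rfl

lemma Jw_cons (m : α → ℕ) (x : α) (L : List α) :
    Jw m (x :: L) = List.replicate (m x) x ++ Jw m L := rfl

lemma count_Jw (m : α → ℕ) (k : α) : ∀ L : List α, L.Nodup →
    (Jw m L).count k = if k ∈ L then m k else 0
  | [], _ => by simp [Jw]
  | x :: L, hnd => by
    have hnd' := hnd.of_cons
    rw [List.nodup_cons] at hnd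
    rw [Jw_cons, List.count_append, List.count_replicate, count_Jw m k L hnd']
    by_cases hk : k = x
    · subst hk
      simp [hnd.1]
    · simp [hk, Ne.symm hk, List.mem_cons]

lemma delta_Jw (m : α → ℕ) (i j : α) (hij : i ≠ j) : ∀ L : List α, L.Nodup →
    [i, j].Sublist L → delta i j (Jw m L) = (m i : ℤ) * m j
  | [], _, hsub => by simp at hsub
  | x :: L, hnd, hsub => by
    have hnd' := hnd.of_cons
    rw [List.nodup_cons] at hnd
    rw [Jw_cons, delta_append, delta_replicate, List.count_replicate, List.count_replicate]
    cases hsub with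
    | cons _ h =>
      have hi : i ∈ L := h.subset (by simp)
      have hj : j ∈ L := h.subset (by simp)
      have hxi : x ≠ i := fun e => hnd.1 (e ▸ hi)
      have hxj : x ≠ j := fun e => hnd.1 (e ▸ hj)
      rw [delta_Jw m i j hij L hnd' h]
      simp [hxi, hxj]
    | cons_cons _ h =>
      have hj : j ∈ L := h.subset (by simp)
      have hiL : i ∉ L := hnd.1
      have hdz : delta i j (Jw m L) = 0 := by
        refine delta_of_count_left i j ?_
        rw [count_Jw m i L hnd']
        simp [hiL]
      rw [hdz, count_Jw m j L hnd', count_Jw m i L hnd']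
      simp [hij, Ne.symm hij, hj, hiL]

end Aux3

section Aux4

lemma pair_sublist {γ : Type*} [Preorder γ] {L : List γ} (hL : L.Pairwise (· < ·))
    {i j : γ} (hi : i ∈ L) (hj : j ∈ L) (hij : i < j) : [i, j].Sublist L := by
  induction L with
  | nil => simp at hi
  | cons x L ih =>
    rw [List.pairwise_cons] at hL
    rcases List.mem_cons.mp hi with rfl | hi'
    · rcases List.mem_cons.mp hj with rfl | hj'
      · exact absurd hij (lt_irrefl _)
      · exact (List.singleton_sublist.mpr hj').cons₂ _
    · rcases List.mem_cons.mp hj with rfl | hj'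
      · exact absurd (hij.trans (hL.1 i hi')) (lt_irrefl _)
      · exact (ih hL.2 hi' hj').cons _

lemma sum_over_pairs {K : ℕ} (k : Fin K) (A : ℕ) :
    ((Finset.univ.filter (fun p : Fin K × Fin K => p.1 < p.2)).sum
      (fun p => if p.1 = k then A else if p.2 = k then A else 0)) = (K - 1 : ℕ) * A := by
  rw [Finset.sum_filter, Fintype.sum_prod_type]
  have hinner : ∀ i : Fin K,
      (Finset.univ.sum (fun j : Fin K =>
        if i < j then (if i = k then A else if j = k then A else 0) else 0))
      = if i = k then (Finset.Ioi k).card * A else if i < k then A else 0 := by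
    intro i
    by_cases hik : i = k
    · subst hik
      rw [if_pos rfl]
      have : ∀ j : Fin K, (if i < j then (if i = i then A else if j = i then A else 0) else 0)
          = if j ∈ Finset.Ioi i then A else 0 := by
        intro j
        by_cases h : i < j <;> simp [h]
      rw [Finset.sum_congr rfl (fun j _ => this j), Finset.sum_ite_mem,
        Finset.univ_inter, Finset.sum_const, smul_eq_mul]
    · rw [if_neg hik]
      have : ∀ j : Fin K, (if i < j then (if i = k then A else if j = k then A else 0) else 0)
          = if j = k then (if i < j then A else 0) else 0 := by
        intro j
        split_ifs <;> simp_all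
      rw [Finset.sum_congr rfl (fun j _ => this j), Finset.sum_ite_eq' Finset.univ k]
      simp
  rw [Finset.sum_congr rfl (fun i _ => hinner i)]
  have split : ∀ i : Fin K,
      (if i = k then (Finset.Ioi k).card * A else if i < k then A else 0)
      = (if i = k then (Finset.Ioi k).card * A else 0)
        + (if i ∈ Finset.Iio k then A else 0) := by
    intro i
    simp only [Finset.mem_Iio]
    split_ifs with h1 h2 <;> simp_all
  rw [Finset.sum_congr rfl (fun i _ => split i), Finset.sum_add_distrib,
    Finset.sum_ite_eq' Finset.univ k, Finset.sum_ite_mem, Finset.univ_inter,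
    Finset.sum_const, smul_eq_mul, Fin.card_Ioi, Fin.card_Iio]
  have hk : (k : ℕ) < K := k.isLt
  simp only [Finset.mem_univ, if_pos]
  have h3 : (K - 1 - (k : ℕ)) + (k : ℕ) = K - 1 := by omega
  calc (K - 1 - (k : ℕ)) * A + (k : ℕ) * A = ((K - 1 - (k : ℕ)) + (k : ℕ)) * A := by ring
    _ = (K - 1) * A := by rw [h3]

end Aux4
set_option maxHeartbeats 1000000 in
/-- Proposition 4 (main combinatorial result): for K ≥ 2, any targets C_ij with
|C_ij| ≤ ℓ_i ℓ_j/(4K²) − 2K(ℓ_i + ℓ_j) − 4K² and C_ij ≡ ℓ_i ℓ_j (mod 2) are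
simultaneously realized by some word with Parikh image ℓ. -/
theorem stmt6 (K : ℕ) (hK : 2 ≤ K) (ℓ : Fin K → ℕ) (C : Fin K → Fin K → ℤ)
    (hbound : ∀ i j : Fin K, i < j →
      (|C i j| : ℚ) ≤ (ℓ i : ℚ) * (ℓ j : ℚ) / (4 * (K : ℚ) ^ 2)
        - 2 * (K : ℚ) * ((ℓ i : ℚ) + (ℓ j : ℚ)) - 4 * (K : ℚ) ^ 2)
    (hmod : ∀ i j : Fin K, i < j → C i j ≡ (ℓ i : ℤ) * (ℓ j : ℤ) [ZMOD 2]) :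
    ∃ w : List (Fin K), (∀ i : Fin K, w.count i = ℓ i) ∧
      ∀ i j : Fin K, i < j → delta i j w = C i j := by
  classical
  have hKm0 : 0 < 2 * (K - 1) := by omega
  set a : Fin K → ℕ := fun k => ℓ k / (2 * (K - 1)) with ha_def
  set m : Fin K → ℕ := fun k => ℓ k % (2 * (K - 1)) with hm_def
  have hma : ∀ k, 2 * (K - 1) * a k + m k = ℓ k := fun k => Nat.div_add_mod _ _
  have hmlt : ∀ k, m k < 2 * (K - 1) := fun k => Nat.mod_lt _ hKm0
  have hKm1 : ((K - 1 : ℕ) : ℤ) = (K : ℤ) - 1 := by omega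
  have hKz2 : (2 : ℤ) ≤ (K : ℤ) := by exact_mod_cast hK
  -- key arithmetic facts for each pair
  have key : ∀ i j : Fin K, i < j →
      |C i j - (m i : ℤ) * m j| ≤ 2 * (a i : ℤ) * a j ∧
      (2 : ℤ) ∣ (C i j - (m i : ℤ) * m j) := by
    intro i j hij
    have hb := hbound i j hij
    have hKq : (0 : ℚ) < 4 * (K : ℚ) ^ 2 := by
      have : (0 : ℚ) < (K : ℚ) := by exact_mod_cast (by omega : 0 < K)
      positivity
    have hdiv : (4 * (K : ℚ) ^ 2) * ((ℓ i : ℚ) * (ℓ j : ℚ) / (4 * (K : ℚ) ^ 2))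
        = (ℓ i : ℚ) * (ℓ j : ℚ) := by field_simp
    have H1q : 4 * (K : ℚ) ^ 2 * (|C i j| : ℚ) ≤ (ℓ i : ℚ) * (ℓ j : ℚ)
        - 8 * (K : ℚ) ^ 3 * ((ℓ i : ℚ) + (ℓ j : ℚ)) - 16 * (K : ℚ) ^ 4 := by
      nlinarith [mul_le_mul_of_nonneg_left hb (le_of_lt hKq)]
    have H1 : 4 * (K : ℤ) ^ 2 * |C i j| ≤ (ℓ i : ℤ) * (ℓ j : ℤ)
        - 8 * (K : ℤ) ^ 3 * ((ℓ i : ℤ) + (ℓ j : ℤ)) - 16 * (K : ℤ) ^ 4 := by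
      exact_mod_cast H1q
    have ei : 2 * ((K : ℤ) - 1) * (a i : ℤ) + (m i : ℤ) = (ℓ i : ℤ) := by
      have h := hma i
      have h2 : ((2 * (K - 1) * a i + m i : ℕ) : ℤ) = (ℓ i : ℤ) := by exact_mod_cast h
      push_cast at h2
      rw [hKm1] at h2
      linarith
    have ej : 2 * ((K : ℤ) - 1) * (a j : ℤ) + (m j : ℤ) = (ℓ j : ℤ) := by
      have h := hma j
      have h2 : ((2 * (K - 1) * a j + m j : ℕ) : ℤ) = (ℓ j : ℤ) := by exact_mod_cast h
      push_cast at h2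
      rw [hKm1] at h2
      linarith
    have mi_lt : (m i : ℤ) ≤ 2 * (K : ℤ) - 3 := by
      have := hmlt i
      omega
    have mj_lt : (m j : ℤ) ≤ 2 * (K : ℤ) - 3 := by
      have := hmlt j
      omega
    have hai0 : (0 : ℤ) ≤ (a i : ℤ) := Int.natCast_nonneg _
    have haj0 : (0 : ℤ) ≤ (a j : ℤ) := Int.natCast_nonneg _
    have hmi0 : (0 : ℤ) ≤ (m i : ℤ) := Int.natCast_nonneg _
    have hmj0 : (0 : ℤ) ≤ (m j : ℤ) := Int.natCast_nonneg _
    have hLi0 : (0 : ℤ) ≤ (ℓ i : ℤ) := Int.natCast_nonneg _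
    have hLj0 : (0 : ℤ) ≤ (ℓ j : ℤ) := Int.natCast_nonneg _
    have habs : (0 : ℤ) ≤ |C i j| := abs_nonneg _
    have habs2 : (0 : ℤ) ≤ 4 * (K : ℤ) ^ 2 * |C i j| :=
      mul_nonneg (by positivity) habs
    have hprod : 8 * (K : ℤ) ^ 3 * ((ℓ i : ℤ) + (ℓ j : ℤ)) + 16 * (K : ℤ) ^ 4
        ≤ (ℓ i : ℤ) * (ℓ j : ℤ) := by linarith
    have hK3 : (0 : ℤ) ≤ 8 * (K : ℤ) ^ 3 := by positivity
    have hK4 : (0 : ℤ) < 16 * (K : ℤ) ^ 4 := by positivity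
    -- ℓ's are positive
    have hLjpos : (0 : ℤ) < (ℓ j : ℤ) := by
      by_contra hc
      push_neg at hc
      have h0 : (ℓ j : ℤ) = 0 := le_antisymm hc hLj0
      rw [h0] at hprod
      nlinarith [mul_nonneg hK3 hLi0]
    have hLipos : (0 : ℤ) < (ℓ i : ℤ) := by
      by_contra hc
      push_neg at hc
      have h0 : (ℓ i : ℤ) = 0 := le_antisymm hc hLi0
      rw [h0] at hprod
      nlinarith [mul_nonneg hK3 hLj0]
    have hLi : 8 * (K : ℤ) ^ 3 ≤ (ℓ i : ℤ) := by
      by_contra hc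
      push_neg at hc
      have h1 : ((ℓ i : ℤ) - 8 * (K : ℤ) ^ 3) * (ℓ j : ℤ) ≤ 0 :=
        mul_nonpos_of_nonpos_of_nonneg (by linarith) hLj0
      nlinarith [mul_nonneg hK3 hLi0]
    have hLj : 8 * (K : ℤ) ^ 3 ≤ (ℓ j : ℤ) := by
      by_contra hc
      push_neg at hc
      have h1 : (ℓ i : ℤ) * ((ℓ j : ℤ) - 8 * (K : ℤ) ^ 3) ≤ 0 :=
        mul_nonpos_of_nonneg_of_nonpos hLi0 (by linarith)
      nlinarith [mul_nonneg hK3 hLj0]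
    have hKcube : 4 * (K : ℤ) ≤ 8 * (K : ℤ) ^ 3 := by
      nlinarith [hKz2, mul_nonneg (sub_nonneg.mpr hKz2) (sq_nonneg ((K : ℤ))),
        sq_nonneg ((K : ℤ) - 1), sq_nonneg ((K : ℤ))]
    have t1i : (ℓ i : ℤ) - 2 * (K : ℤ) ≤ 2 * (K : ℤ) * (a i : ℤ) := by
      linarith [ei, mi_lt, hai0]
    have t1j : (ℓ j : ℤ) - 2 * (K : ℤ) ≤ 2 * (K : ℤ) * (a j : ℤ) := by
      linarith [ej, mj_lt, haj0]
    have hfac : (0 : ℤ) ≤ (ℓ i : ℤ) - 2 * (K : ℤ) := by linarith [hLi, hKcube, hKz2]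
    have hfac' : (0 : ℤ) ≤ (ℓ j : ℤ) - 2 * (K : ℤ) := by linarith [hLj, hKcube, hKz2]
    have t2 : ((ℓ i : ℤ) - 2 * (K : ℤ)) * ((ℓ j : ℤ) - 2 * (K : ℤ))
        ≤ (2 * (K : ℤ) * (a i : ℤ)) * (2 * (K : ℤ) * (a j : ℤ)) :=
      mul_le_mul t1i t1j hfac' (by positivity)
    have m_bound : (m i : ℤ) * (m j : ℤ) ≤ 4 * (K : ℤ) ^ 2 := by
      have h1 : (m i : ℤ) * (m j : ℤ) ≤ (2 * (K : ℤ) - 3) * (2 * (K : ℤ) - 3) :=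
        mul_le_mul mi_lt mj_lt hmj0 (by linarith)
      nlinarith
    have hmm2 : 4 * (K : ℤ) ^ 2 * ((m i : ℤ) * m j) ≤ 4 * (K : ℤ) ^ 2 * (4 * (K : ℤ) ^ 2) :=
      mul_le_mul_of_nonneg_left m_bound (by positivity)
    have hLL : (0 : ℤ) ≤ (ℓ i : ℤ) * (ℓ j : ℤ) := mul_nonneg hLi0 hLj0
    have hKL : (0 : ℤ) ≤ (8 * (K : ℤ) ^ 3 - 4 * (K : ℤ)) * ((ℓ i : ℤ) + (ℓ j : ℤ)) := by
      apply mul_nonneg _ (by linarith)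
      linarith [hKcube]
    have big : 4 * (K : ℤ) ^ 2 * (|C i j| + (m i : ℤ) * m j)
        ≤ 4 * (K : ℤ) ^ 2 * (2 * (a i : ℤ) * a j) := by
      nlinarith [H1, t2, hmm2, hLL, hKL, sq_nonneg ((K : ℤ))]
    have main : |C i j| + (m i : ℤ) * m j ≤ 2 * (a i : ℤ) * a j :=
      le_of_mul_le_mul_left big (by positivity)
    constructor
    · calc |C i j - (m i : ℤ) * m j| ≤ |C i j| + |(m i : ℤ) * m j| := abs_sub _ _
        _ = |C i j| + (m i : ℤ) * m j := by rw [abs_of_nonneg (mul_nonneg hmi0 hmj0)]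
        _ ≤ 2 * (a i : ℤ) * a j := main
    · -- parity
      have hmi : (ℓ i : ℤ) ≡ (m i : ℤ) [ZMOD 2] := by
        apply Int.ModEq.symm
        rw [Int.modEq_iff_dvd]
        exact ⟨((K : ℤ) - 1) * (a i : ℤ), by linarith [ei]⟩
      have hmj : (ℓ j : ℤ) ≡ (m j : ℤ) [ZMOD 2] := by
        apply Int.ModEq.symm
        rw [Int.modEq_iff_dvd]
        exact ⟨((K : ℤ) - 1) * (a j : ℤ), by linarith [ej]⟩
      have h1 : C i j ≡ (m i : ℤ) * m j [ZMOD 2] := (hmod i j hij).trans (hmi.mul hmj)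
      have h2 := h1.dvd
      obtain ⟨c, hc⟩ := h2
      exact ⟨-c, by linarith⟩
  -- block inversion counts
  set Sn : Fin K × Fin K → ℕ := fun p =>
    ((2 * (a p.1 : ℤ) * a p.2 - (C p.1 p.2 - (m p.1 : ℤ) * m p.2)) / 2).toNat with hSn_def
  set sR : Fin K × Fin K → ℕ := fun p => min (Sn p) (a p.1 * a p.2) with hsR_def
  set sS : Fin K × Fin K → ℕ := fun p => Sn p - sR p with hsS_def
  have hS : ∀ p : Fin K × Fin K, p.1 < p.2 →
      sR p ≤ a p.1 * a p.2 ∧ sS p ≤ a p.1 * a p.2 ∧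
      ((a p.1 : ℤ) * a p.2 - 2 * sR p) + ((a p.1 : ℤ) * a p.2 - 2 * sS p)
        = C p.1 p.2 - (m p.1 : ℤ) * m p.2 := by
    rintro ⟨i, j⟩ hij
    simp only at hij ⊢
    obtain ⟨hle, hdvd⟩ := key i j hij
    obtain ⟨habs1, habs2⟩ := abs_le.mp hle
    have habz : ((a i * a j : ℕ) : ℤ) = (a i : ℤ) * a j := by push_cast; ring
    have hdX : (2 : ℤ) ∣ (2 * (a i : ℤ) * a j - (C i j - (m i : ℤ) * m j)) :=
      dvd_sub ⟨(a i : ℤ) * a j, by ring⟩ hdvd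
    have hX0 : (0 : ℤ) ≤ 2 * (a i : ℤ) * a j - (C i j - (m i : ℤ) * m j) := by linarith
    have h2X : 2 * ((2 * (a i : ℤ) * a j - (C i j - (m i : ℤ) * m j)) / 2)
        = 2 * (a i : ℤ) * a j - (C i j - (m i : ℤ) * m j) := Int.mul_ediv_cancel' hdX
    have hSnc : (Sn (i, j) : ℤ)
        = (2 * (a i : ℤ) * a j - (C i j - (m i : ℤ) * m j)) / 2 := by
      simp only [hSn_def]
      exact Int.toNat_of_nonneg (Int.ediv_nonneg hX0 (by norm_num))
    have hSn2 : (Sn (i, j) : ℤ) * 2 = 2 * (a i : ℤ) * a j - (C i j - (m i : ℤ) * m j) := by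
      rw [hSnc]; linarith [h2X]
    have hSnN : Sn (i, j) ≤ 2 * (a i * a j) := by
      have hz : (Sn (i, j) : ℤ) ≤ ((2 * (a i * a j) : ℕ) : ℤ) := by
        push_cast
        linarith [hSn2]
      exact_mod_cast hz
    have hminR : sR (i, j) = min (Sn (i, j)) (a i * a j) := rfl
    have hminS : sS (i, j) = Sn (i, j) - sR (i, j) := rfl
    have hR_le : sR (i, j) ≤ a i * a j := hminR ▸ min_le_right _ _
    have hS_le : sS (i, j) ≤ a i * a j := by
      rcases le_total (Sn (i, j)) (a i * a j) with h | h
      · rw [hminS, hminR, min_eq_left h]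
        omega
      · rw [hminS, hminR, min_eq_right h]
        exact Nat.sub_le_iff_le_add.mpr (by omega)
    have hsum : sR (i, j) + sS (i, j) = Sn (i, j) := by
      rw [hminS, hminR]
      have := min_le_left (Sn (i, j)) (a i * a j)
      omega
    refine ⟨hR_le, hS_le, ?_⟩
    have hcast : ((sR (i, j) : ℤ) + sS (i, j)) = (Sn (i, j) : ℤ) := by exact_mod_cast hsum
    linarith [hSn2, hcast]
  -- the word
  set fR : Fin K × Fin K → List (Fin K) := fun p =>
    if p.1 < p.2 then blk p.1 p.2 (a p.1) (a p.2) (sR p) else [] with hfR_def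
  set fS : Fin K × Fin K → List (Fin K) := fun p =>
    if p.1 < p.2 then blk p.1 p.2 (a p.1) (a p.2) (sS p) else [] with hfS_def
  set pl : List (Fin K × Fin K) :=
    (List.product (List.finRange K) (List.finRange K)).filter
      (fun p => decide (p.1 < p.2)) with hpl_def
  set M : List (Fin K) := Jw m (List.finRange K) with hM_def
  have hplnd : pl.Nodup :=
    ((List.nodup_finRange K).product (List.nodup_finRange K)).filter _
  have hplmem : ∀ p : Fin K × Fin K, p ∈ pl ↔ p.1 < p.2 := by
    rintro ⟨p1, p2⟩
    simp [hpl_def, List.mem_filter, List.mem_product, List.mem_finRange]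
  have hcnt : ∀ p : Fin K × Fin K, ∀ k, (fR p).count k = (fS p).count k := by
    intro p k
    by_cases hp : p.1 < p.2
    · have hne : p.1 ≠ p.2 := ne_of_lt hp
      obtain ⟨h1, h2, _⟩ := hS p hp
      simp only [hfR_def, hfS_def, if_pos hp]
      by_cases hk1 : k = p.1
      · subst hk1
        rw [blk_count_left _ _ hne _ _ _ h1, blk_count_left _ _ hne _ _ _ h2]
      · by_cases hk2 : k = p.2
        · subst hk2
          rw [blk_count_right _ _ hne _ _ _ h1, blk_count_right _ _ hne _ _ _ h2]
        · rw [blk_count_other _ _ _ _ _ _ hk1 hk2, blk_count_other _ _ _ _ _ _ hk1 hk2]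
    · simp only [hfR_def, hfS_def, if_neg hp]
  refine ⟨build fR fS M pl, ?_, ?_⟩
  · -- counts
    intro k
    rw [count_build]
    have hMc : M.count k = m k := by
      rw [hM_def, count_Jw m k _ (List.nodup_finRange K)]
      simp [List.mem_finRange]
    have hmap : pl.map (fun p => (fR p).count k + (fS p).count k)
        = pl.map (fun p => if p.1 = k then 2 * a k else if p.2 = k then 2 * a k else 0) := by
      apply List.map_congr_left
      intro p hp
      have hplt : p.1 < p.2 := (hplmem p).mp hp
      have hne : p.1 ≠ p.2 := ne_of_lt hplt
      obtain ⟨h1, h2, _⟩ := hS p hplt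
      simp only [hfR_def, hfS_def, if_pos hplt]
      by_cases hk1 : p.1 = k
      · rw [if_pos hk1, ← hk1, blk_count_left _ _ hne _ _ _ h1,
          blk_count_left _ _ hne _ _ _ h2]
        omega
      · rw [if_neg hk1]
        by_cases hk2 : p.2 = k
        · rw [if_pos hk2, ← hk2, blk_count_right _ _ hne _ _ _ h1,
            blk_count_right _ _ hne _ _ _ h2]
          omega
        · rw [if_neg hk2, blk_count_other _ _ _ _ _ _ (Ne.symm hk1) (Ne.symm hk2),
            blk_count_other _ _ _ _ _ _ (Ne.symm hk1) (Ne.symm hk2)]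
    rw [hMc, hmap]
    have htf : pl.toFinset = Finset.univ.filter (fun p : Fin K × Fin K => p.1 < p.2) := by
      ext p
      simp [List.mem_toFinset, hplmem p]
    have hsum := List.sum_toFinset
      (fun p : Fin K × Fin K => if p.1 = k then 2 * a k else if p.2 = k then 2 * a k else 0) hplnd
    rw [← hsum, htf, sum_over_pairs k (2 * a k)]
    have h := hma k
    calc m k + (K - 1) * (2 * a k) = 2 * (K - 1) * a k + m k := by ring
      _ = ℓ k := h
  · -- deltas
    intro i j hij
    have hijne : i ≠ j := ne_of_lt hij
    rw [delta_build fR fS M i j hcnt]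
    have hMd : delta i j M = (m i : ℤ) * m j := by
      rw [hM_def]
      exact delta_Jw m i j hijne _ (List.nodup_finRange K)
        (pair_sublist (List.pairwise_lt_finRange K) (List.mem_finRange i)
          (List.mem_finRange j) hij)
    have hone : (i, j) ∈ pl := (hplmem (i, j)).mpr hij
    have hzero : ∀ p ∈ pl, p ≠ (i, j) →
        (fun p => delta i j (fR p) + delta i j (fS p)) p = 0 := by
      intro p hp hpne
      have hplt : p.1 < p.2 := (hplmem p).mp hp
      simp only [hfR_def, hfS_def, if_pos hplt]
      by_cases hi1 : i = p.1
      · by_cases hj2 : j = p.2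
        · exact absurd (Prod.ext hi1.symm hj2.symm) hpne
        · have hj1 : j ≠ p.1 := fun h => hijne (hi1.trans h.symm)
          rw [delta_of_count_right i j (blk_count_other _ _ _ _ _ _ hj1 hj2),
            delta_of_count_right i j (blk_count_other _ _ _ _ _ _ hj1 hj2)]
          ring
      · by_cases hi2 : i = p.2
        · have hj1 : j ≠ p.1 := by
            rintro rfl
            rw [hi2] at hij
            exact absurd (hij.trans hplt) (lt_irrefl _)
          have hj2 : j ≠ p.2 := by
            rintro rfl
            rw [hi2] at hij
            exact absurd hij (lt_irrefl _)
          rw [delta_of_count_right i j (blk_count_other _ _ _ _ _ _ hj1 hj2),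
            delta_of_count_right i j (blk_count_other _ _ _ _ _ _ hj1 hj2)]
          ring
        · rw [delta_of_count_left i j (blk_count_other _ _ _ _ _ _ hi1 hi2),
            delta_of_count_left i j (blk_count_other _ _ _ _ _ _ hi1 hi2)]
          ring
    rw [sum_map_single hplnd hone hzero]
    obtain ⟨h1, h2, h3⟩ := hS (i, j) hij
    simp only at h1 h2 h3
    simp only [hfR_def, hfS_def, if_pos hij]
    rw [blk_delta i j hijne _ _ _ h1, blk_delta i j hijne _ _ _ h2, hMd]
    linarith [h3]
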